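/- Let ψ₀(ζ) = |ζ|²/2 on ℝ^{d-1}. For ε₀ > 0 and integer N ≥ 100d, let 𝔊(ε₀,N) be the set of smooth ψ : [-1,1]^{d-1} → ℝ with ‖ψ − ψ₀‖_{C^N} ≤ ε₀. For ψ ∈ 𝔊(ε₀,N), a ∈ ½[-1,1]^{d-1}, and 0 < ε ≤ 1/2, define ψ_a^ε(ζ) = ε^{-2}(ψ(ε (√(Hψ(a)))^{-1} ζ + a) − ψ(a) − ε ∇ψ(a)·(√(Hψ(a)))^{-1} ζ), where Hψ(a) is the Hessian and √(Hψ(a)) its positive square root. Then there is a constant κ = κ(ε₀,N) > 0, independent of a and ψ, such that ψ_a^ε ∈ 𝔊(ε₀,N) whenever 0 < ε ≤ κ. -/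

import Mathlib

open MeasureTheory Real
open scoped ENNReal

noncomputable section

/-- The closed cube `[-1,1]^m`. -/
def cube (m : ℕ) : Set (EuclideanSpace ℝ (Fin m)) := {x | ∀ i, |x i| ≤ 1}

/-- The half cube `(1/2)[-1,1]^m`. -/
def halfCube (m : ℕ) : Set (EuclideanSpace ℝ (Fin m)) := {x | ∀ i, |x i| ≤ 1/2}

/-- `ψ₀(ζ) = |ζ|²/2`. -/
def psi0 {m : ℕ} (ζ : EuclideanSpace ℝ (Fin m)) : ℝ := ‖ζ‖ ^ 2 / 2

/-- Membership in the class `𝔊(ε₀, N)`: smooth with `‖ψ - ψ₀‖_{C^N([-1,1]^m)} ≤ ε₀`. -/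
def inG (m : ℕ) (ε₀ : ℝ) (N : ℕ) (ψ : EuclideanSpace ℝ (Fin m) → ℝ) : Prop :=
  ContDiff ℝ (⊤ : ℕ∞) ψ ∧
    ∀ n ≤ N, ∀ ζ ∈ cube m, ‖iteratedFDeriv ℝ n (fun z => ψ z - psi0 z) ζ‖ ≤ ε₀

/-- The Hessian matrix of `ψ` at `a`. -/
def hess (m : ℕ) (ψ : EuclideanSpace ℝ (Fin m) → ℝ) (a : EuclideanSpace ℝ (Fin m)) :
    Matrix (Fin m) (Fin m) ℝ :=
  Matrix.of fun i j =>
    iteratedFDeriv ℝ 2 ψ a ![EuclideanSpace.single i 1, EuclideanSpace.single j 1]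

/-- The parabolic rescaling `ψ_a^ε`, where `S = √(Hψ(a))`:
`ψ_a^ε(ζ) = ε⁻²(ψ(a + ε S⁻¹ζ) - ψ(a) - ε ∇ψ(a)·(S⁻¹ζ))`. -/
def rescaled (m : ℕ) (ψ : EuclideanSpace ℝ (Fin m) → ℝ) (a : EuclideanSpace ℝ (Fin m))
    (S : Matrix (Fin m) (Fin m) ℝ) (ε : ℝ) (ζ : EuclideanSpace ℝ (Fin m)) : ℝ :=
  ε⁻¹ ^ 2 *
    (ψ (a + ε • ((WithLp.equiv 2 (Fin m → ℝ)).symm (S⁻¹.mulVec fun i => ζ i))) - ψ a -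
      ε * fderiv ℝ ψ a ((WithLp.equiv 2 (Fin m → ℝ)).symm (S⁻¹.mulVec fun i => ζ i)))


section helpers

variable {EE FF : Type*} [NormedAddCommGroup EE] [NormedSpace ℝ EE]
  [NormedAddCommGroup FF] [NormedSpace ℝ FF]

universe u_shift

lemma my_iteratedFDeriv_comp_const_add {EE' : Type u_shift} [NormedAddCommGroup EE']
    [NormedSpace ℝ EE'] (n : ℕ) :
    ∀ {FF' : Type u_shift} [NormedAddCommGroup FF'] [NormedSpace ℝ FF'] {f : EE' → FF'},
      ContDiff ℝ (⊤ : ℕ∞) f → ∀ (c x : EE'),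
      iteratedFDeriv ℝ n (fun z => f (c + z)) x = iteratedFDeriv ℝ n f (c + x) := by
  induction n with
  | zero => intro FF' _ _ f hf c x; ext mv; simp
  | succ n ih =>
    intro FF' _ _ f hf c x
    have hfd : (fun y => fderiv ℝ (fun z => f (c + z)) y) = fun y => fderiv ℝ f (c + y) := by
      funext y
      have h1 : HasFDerivAt (fun z : EE' => c + z) (ContinuousLinearMap.id ℝ EE') y := by
        simpa using (hasFDerivAt_id y).const_add c
      have h2 := ((hf.differentiable (by simp) (c + y)).hasFDerivAt).comp y h1
      exact h2.fderiv
    ext mv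
    rw [iteratedFDeriv_succ_apply_right, iteratedFDeriv_succ_apply_right, hfd,
      ih (f := fderiv ℝ f) (hf.fderiv_right (m := (⊤ : ℕ∞)) (by simp)) c x]

lemma my_quad_hasFDerivAt (b : EE →L[ℝ] EE →L[ℝ] ℝ) (hb : ∀ u w, b u w = b w u) (c x : EE) :
    HasFDerivAt (fun y => (2⁻¹ : ℝ) • b (y - c) (y - c)) (b (x - c)) x := by
  have h1 : HasFDerivAt (fun y : EE => ((y - c, y - c) : EE × EE))
      ((ContinuousLinearMap.id ℝ EE).prod (ContinuousLinearMap.id ℝ EE)) x :=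
    ((hasFDerivAt_id x).sub_const c).prodMk ((hasFDerivAt_id x).sub_const c)
  have h2 := ((b.isBoundedBilinearMap.hasFDerivAt (x - c, x - c)).comp x h1).const_smul (2⁻¹ : ℝ)
  refine HasFDerivAt.congr_fderiv h2 ?_
  ext w
  have hw := hb w (x - c)
  simp only [ContinuousLinearMap.smul_apply, ContinuousLinearMap.comp_apply,
    ContinuousLinearMap.prod_apply, ContinuousLinearMap.id_apply,
    IsBoundedBilinearMap.deriv_apply, smul_eq_mul]
  rw [hw]
  ring

lemma my_clm_sub_const_hasFDerivAt (b : EE →L[ℝ] FF) (c x : EE) :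
    HasFDerivAt (fun y => b (y - c)) b x := by
  have h := b.hasFDerivAt.comp x ((hasFDerivAt_id x).sub_const c)
  simp only [ContinuousLinearMap.comp_id] at h
  exact h

lemma my_iter_zero {f : EE → FF} {K : EE →L[ℝ] EE →L[ℝ] FF}
    (h : fderiv ℝ (fderiv ℝ f) = fun _ => K) {n : ℕ} (hn : 3 ≤ n) (x : EE) :
    iteratedFDeriv ℝ n f x = 0 := by
  obtain ⟨k, rfl⟩ : ∃ k, n = k + 3 := ⟨n - 3, by omega⟩
  rw [← norm_eq_zero]
  have e1 : k + 3 = (k + 2) + 1 := by omega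
  have e2 : k + 2 = (k + 1) + 1 := by omega
  rw [e1, ← norm_iteratedFDeriv_fderiv, e2, ← norm_iteratedFDeriv_fderiv, h,
    iteratedFDeriv_const_of_ne (by omega : k + 1 ≠ 0)]
  simp

lemma my_norm_fderiv_eq (f : EE → FF) (x : EE) :
    ‖fderiv ℝ f x‖ = ‖iteratedFDeriv ℝ 1 f x‖ := by
  rw [← norm_iteratedFDeriv_zero (𝕜 := ℝ) (f := fderiv ℝ f) (x := x),
    norm_iteratedFDeriv_fderiv]

lemma my_fderiv3_bound (ψ : EE → ℝ) (y : EE) (C : ℝ) (h : ‖iteratedFDeriv ℝ 3 ψ y‖ ≤ C)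
    (v w u : EE) : ‖fderiv ℝ (fderiv ℝ (fderiv ℝ ψ)) y v w u‖ ≤ C * ‖v‖ * ‖w‖ * ‖u‖ := by
  have e : iteratedFDeriv ℝ 3 ψ y ![v, w, u] = fderiv ℝ (fderiv ℝ (fderiv ℝ ψ)) y v w u := by
    rw [iteratedFDeriv_succ_apply_right, iteratedFDeriv_succ_apply_right, iteratedFDeriv_one_apply]
    rfl
  have hle := (iteratedFDeriv ℝ 3 ψ y).le_opNorm ![v, w, u]
  rw [e, Fin.prod_univ_three] at hle
  refine hle.trans ?_
  simp only [Matrix.cons_val_zero, Matrix.cons_val_one, Matrix.cons_val_two, Matrix.head_cons,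
    Matrix.tail_cons]
  rw [mul_assoc, mul_assoc, mul_assoc]
  exact mul_le_mul_of_nonneg_right h (by positivity)

end helpers

section aux
open scoped Matrix

local notation "E" m => EuclideanSpace ℝ (Fin m)

set_option maxHeartbeats 1000000 in
theorem aux_stmt (m : ℕ) (hm : 1 ≤ m) {ε₀ : ℝ} (hε₀ : 0 < ε₀) (hε₀' : ε₀ < 1/2)
    {N : ℕ} (hN : 200 ≤ N) (ψ : EuclideanSpace ℝ (Fin m) → ℝ) (hψ : inG m ε₀ N ψ)
    (a : EuclideanSpace ℝ (Fin m)) (ha : a ∈ halfCube m)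
    (S : Matrix (Fin m) (Fin m) ℝ) (hSsymm : S.IsSymm) (hSpos : S.PosDef)
    (hSS : S * S = hess m ψ a) (ε : ℝ) (hε : 0 < ε) (hκ : ε ≤ 1/(8*((m:ℝ)+1)^3)) :
    inG m ε₀ N (rescaled m ψ a S ε) := by
  obtain ⟨hψC, hψbd⟩ := hψ
  set μ : ℝ := (m : ℝ) with hμdef
  have hμ : 1 ≤ μ := by rw [hμdef]; exact_mod_cast hm
  have hexp3 : (μ+1)^3 = μ^3+3*μ^2+3*μ+1 := by ring
  have hμsq : 0 ≤ μ^2 := by positivity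
  have hμcub : 0 ≤ μ^3 := by positivity
  have hμ0 : 0 ≤ μ := by linarith
  -- basic numeric facts
  have h8 : 8 * ε * (μ + 1)^3 ≤ 1 := by
    have hp : (0:ℝ) < 8*(μ+1)^3 := by positivity
    calc 8*ε*(μ+1)^3 = ε * (8*(μ+1)^3) := by ring
      _ ≤ (1/(8*(μ+1)^3)) * (8*(μ+1)^3) := by
          exact mul_le_mul_of_nonneg_right hκ hp.le
      _ = 1 := by field_simp
  have hcube1 : μ ≤ (μ+1)^3 := by nlinarith [hμsq, hμcub]
  have hcube2 : μ^2 ≤ (μ+1)^3 := by nlinarith [hμcub, hμ0]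
  have hcube3 : μ^3 ≤ (μ+1)^3 := by nlinarith [hμsq, hμ0]
  have hone : (1:ℝ) ≤ (μ+1)^3 := by nlinarith [hμsq, hμcub, hμ0]
  have h8ε : 8 * ε ≤ 1 := by nlinarith [mul_le_mul_of_nonneg_left hone (by linarith : (0:ℝ) ≤ 8*ε)]
  -- cube facts
  have habs : ∀ (x : EuclideanSpace ℝ (Fin m)) (i : Fin m), |x i| ≤ ‖x‖ := by
    intro x i
    rw [EuclideanSpace.norm_eq]
    have h1 : |x i| = Real.sqrt (‖x i‖^2) := by
      rw [Real.sqrt_sq_eq_abs, Real.norm_eq_abs, abs_abs]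
    rw [h1]
    exact Real.sqrt_le_sqrt (Finset.single_le_sum (f := fun j => ‖x j‖^2)
      (fun j _ => by positivity) (Finset.mem_univ i))
  have hnormcube : ∀ x ∈ cube m, ‖x‖ ≤ μ := by
    intro x hx
    rw [EuclideanSpace.norm_eq]
    have h1 : ∑ i, ‖x i‖ ^ 2 ≤ μ := by
      calc ∑ i, ‖x i‖^2 ≤ ∑ _i : Fin m, (1:ℝ) := by
            refine Finset.sum_le_sum fun i _ => ?_
            have := hx i
            rw [Real.norm_eq_abs]
            nlinarith [abs_nonneg (x i)]
        _ = μ := by simp [hμdef]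
    calc Real.sqrt (∑ i, ‖x i‖^2) ≤ Real.sqrt μ := Real.sqrt_le_sqrt h1
      _ ≤ μ := by
          have hs : Real.sqrt μ ≤ Real.sqrt (μ^2) := Real.sqrt_le_sqrt (by nlinarith [hμ0, hμ])
          rwa [Real.sqrt_sq hμ0] at hs
  have hac : a ∈ cube m := by
    intro i
    have := ha i
    linarith [this]
  have hmem : ∀ x : EuclideanSpace ℝ (Fin m), ‖x - a‖ ≤ 1/2 → x ∈ cube m := by
    intro x hx i
    have h1 : |x i - a i| ≤ 1/2 := by
      have := habs (x - a) i
      exact le_trans (by exact this) hx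
    have h2 := ha i
    calc |x i| = |(x i - a i) + a i| := by ring_nf
      _ ≤ |x i - a i| + |a i| := abs_add_le _ _
      _ ≤ 1/2 + 1/2 := add_le_add h1 h2
      _ = 1 := by norm_num
  have hconv : Convex ℝ (cube m) := by
    intro x hx y hy s t hs ht hst
    intro i
    have happ : (s • x + t • y) i = s * x i + t * y i := rfl
    rw [happ]
    calc |s * x i + t * y i| ≤ |s * x i| + |t * y i| := abs_add_le _ _
      _ = s * |x i| + t * |y i| := by
          rw [abs_mul, abs_mul, abs_of_nonneg hs, abs_of_nonneg ht]
      _ ≤ s * 1 + t * 1 := by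
          have := hx i; have := hy i
          gcongr <;> assumption
      _ = 1 := by linarith
  have hsegnorm : ∀ (x : EuclideanSpace ℝ (Fin m)), ∀ z ∈ segment ℝ a x,
      ‖z - a‖ ≤ ‖x - a‖ := by
    intro x z hz
    obtain ⟨s, t, hs, ht, hst, rfl⟩ := hz
    have hz' : s • a + t • x - a = t • (x - a) := by
      have hseq : s = 1 - t := by linarith
      rw [hseq]
      module
    rw [hz', norm_smul, Real.norm_eq_abs, abs_of_nonneg ht]
    exact mul_le_of_le_one_left (norm_nonneg _) (by linarith)
  -- psi0 facts
  have hb0 : ∀ u w : EuclideanSpace ℝ (Fin m),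
      (innerSL ℝ : EuclideanSpace ℝ (Fin m) →L[ℝ] EuclideanSpace ℝ (Fin m) →L[ℝ] ℝ) u w
        = (innerSL ℝ) w u := by
    intro u w
    simp only [innerSL_apply_apply]
    exact real_inner_comm w u
  have hpsi0eq : (psi0 : EuclideanSpace ℝ (Fin m) → ℝ)
      = fun x => (2⁻¹ : ℝ) • (innerSL ℝ : EuclideanSpace ℝ (Fin m) →L[ℝ]
          EuclideanSpace ℝ (Fin m) →L[ℝ] ℝ) (x - 0) (x - 0) := by
    funext x
    show ‖x‖^2/2 = _
    rw [sub_zero]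
    rw [innerSL_apply_apply, real_inner_self_eq_norm_sq, smul_eq_mul]
    ring
  have hpsi0C : ContDiff ℝ (⊤ : ℕ∞) (psi0 : EuclideanSpace ℝ (Fin m) → ℝ) := by
    rw [hpsi0eq]
    exact (((innerSL ℝ).isBoundedBilinearMap.contDiff).comp
      (((contDiff_id.sub contDiff_const)).prodMk ((contDiff_id.sub contDiff_const)))).const_smul _
  have hpsi0d1 : ∀ x : EuclideanSpace ℝ (Fin m), fderiv ℝ psi0 x = (innerSL ℝ) x := by
    intro x
    rw [hpsi0eq]
    have h := my_quad_hasFDerivAt (innerSL ℝ) hb0 0 x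
    rw [sub_zero] at h
    exact h.fderiv
  have hpsi0d2 : fderiv ℝ (fderiv ℝ (psi0 : EuclideanSpace ℝ (Fin m) → ℝ))
      = fun _ => (innerSL ℝ : EuclideanSpace ℝ (Fin m) →L[ℝ]
          EuclideanSpace ℝ (Fin m) →L[ℝ] ℝ) := by
    funext x
    rw [show fderiv ℝ (psi0 : EuclideanSpace ℝ (Fin m) → ℝ) = fun y => (innerSL ℝ) y
      from funext hpsi0d1]
    exact (innerSL ℝ : EuclideanSpace ℝ (Fin m) →L[ℝ]
      EuclideanSpace ℝ (Fin m) →L[ℝ] ℝ).hasFDerivAt.fderiv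
  have hpsi0n3 : ∀ n, 3 ≤ n → ∀ x, iteratedFDeriv ℝ n (psi0 : EuclideanSpace ℝ (Fin m) → ℝ) x
      = 0 := fun n hn x => my_iter_zero hpsi0d2 hn x
  have hpsi0two : ∀ (x v w : EuclideanSpace ℝ (Fin m)),
      iteratedFDeriv ℝ 2 (psi0 : EuclideanSpace ℝ (Fin m) → ℝ) x ![v, w] = inner ℝ v w := by
    intro x v w
    rw [iteratedFDeriv_two_apply, hpsi0d2]
    show (innerSL ℝ) (![v, w] 0) (![v, w] 1) = _
    rw [Matrix.cons_val_zero, Matrix.cons_val_one, Matrix.cons_val_zero, innerSL_apply_apply]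
  -- φ = ψ - psi0
  have hφC : ContDiff ℝ (⊤ : ℕ∞) (fun z => ψ z - psi0 z) := hψC.sub hpsi0C
  have hψsplit : ∀ (n : ℕ) (x : EuclideanSpace ℝ (Fin m)),
      iteratedFDeriv ℝ n ψ x
        = iteratedFDeriv ℝ n (fun z => ψ z - psi0 z) x + iteratedFDeriv ℝ n psi0 x := by
    intro n x
    have h1 : iteratedFDeriv ℝ n (fun z => (fun z => ψ z - psi0 z) z + psi0 z) x
        = iteratedFDeriv ℝ n (fun z => ψ z - psi0 z) x + iteratedFDeriv ℝ n psi0 x :=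
      iteratedFDeriv_add_apply' (hφC.of_le (by exact_mod_cast le_top)).contDiffAt (hpsi0C.of_le (by exact_mod_cast le_top)).contDiffAt
    rw [← h1]
    congr 1
    funext z
    ring
  have hDn : ∀ n, 3 ≤ n → n ≤ N → ∀ x ∈ cube m, ‖iteratedFDeriv ℝ n ψ x‖ ≤ ε₀ := by
    intro n h3 hn x hx
    rw [hψsplit n x, hpsi0n3 n h3 x, add_zero]
    exact hψbd n hn x hx
  -- second derivative B
  set B := fderiv ℝ (fderiv ℝ ψ) a with hBdef
  have hψd1C : ContDiff ℝ (⊤ : ℕ∞) (fderiv ℝ ψ) := hψC.fderiv_right (m := (⊤ : ℕ∞)) (by simp)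
  have hψd2C : ContDiff ℝ (⊤ : ℕ∞) (fderiv ℝ (fderiv ℝ ψ)) := hψd1C.fderiv_right (m := (⊤ : ℕ∞)) (by simp)
  have hBsymm : ∀ v w, B v w = B w v := by
    intro v w
    exact second_derivative_symmetric
      (fun y => (hψC.differentiable (by simp) y).hasFDerivAt)
      ((hψd1C.differentiable (by simp) a).hasFDerivAt) v w
  have hB2 : ∀ (v w : EuclideanSpace ℝ (Fin m)),
      iteratedFDeriv ℝ 2 ψ a ![v, w] = B v w := by
    intro v w
    rw [iteratedFDeriv_two_apply, hBdef, Matrix.cons_val_zero, Matrix.cons_val_one,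
      Matrix.cons_val_zero]
  -- quadratic lower bound
  have hQ : ∀ v : EuclideanSpace ℝ (Fin m), (1 - ε₀) * ‖v‖^2 ≤ B v v := by
    intro v
    have hsplit := hψsplit 2 a
    have h1 : iteratedFDeriv ℝ 2 ψ a ![v, v]
        = iteratedFDeriv ℝ 2 (fun z => ψ z - psi0 z) a ![v, v] + ‖v‖^2 := by
      rw [hsplit]
      rw [ContinuousMultilinearMap.add_apply, hpsi0two a v v, real_inner_self_eq_norm_sq]
    have h2 : |iteratedFDeriv ℝ 2 (fun z => ψ z - psi0 z) a ![v, v]| ≤ ε₀ * (‖v‖ * ‖v‖) := by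
      have hb := hψbd 2 (by omega) a hac
      have hle := (iteratedFDeriv ℝ 2 (fun z => ψ z - psi0 z) a).le_opNorm ![v, v]
      rw [Fin.prod_univ_two, Matrix.cons_val_zero, Matrix.cons_val_one, Matrix.cons_val_zero] at hle
      calc |iteratedFDeriv ℝ 2 (fun z => ψ z - psi0 z) a ![v, v]|
          ≤ ‖iteratedFDeriv ℝ 2 (fun z => ψ z - psi0 z) a‖ * (‖v‖ * ‖v‖) := hle
        _ ≤ ε₀ * (‖v‖ * ‖v‖) := by
            have : (0:ℝ) ≤ ‖v‖ * ‖v‖ := by positivity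
            exact mul_le_mul_of_nonneg_right hb this
    have h3 := hB2 v v
    have h4 := abs_le.mp h2
    nlinarith [sq_nonneg ‖v‖, sq (‖v‖)]
  -- the matrix linear map
  set L : EuclideanSpace ℝ (Fin m) →L[ℝ] EuclideanSpace ℝ (Fin m) :=
    LinearMap.toContinuousLinearMap (Matrix.toEuclideanLin S⁻¹) with hLdef
  have hLapp : ∀ ζ : EuclideanSpace ℝ (Fin m),
      L ζ = (WithLp.equiv 2 (Fin m → ℝ)).symm (S⁻¹.mulVec fun i => ζ i) := fun ζ => rfl
  have hdet : IsUnit S.det := isUnit_iff_ne_zero.mpr hSpos.det_pos.ne'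
  -- basis expansion
  have hsum : ∀ x : EuclideanSpace ℝ (Fin m),
      ∑ i, x i • EuclideanSpace.single i (1:ℝ) = x := by
    intro x
    have h := (EuclideanSpace.basisFun (Fin m) ℝ).toBasis.sum_repr x
    simpa [OrthonormalBasis.coe_toBasis, OrthonormalBasis.coe_toBasis_repr_apply,
      EuclideanSpace.basisFun_apply, EuclideanSpace.basisFun_repr] using h
  have hBexp : ∀ u w : EuclideanSpace ℝ (Fin m),
      B u w = ∑ i, ∑ j, u i * w j
        * B (EuclideanSpace.single i 1) (EuclideanSpace.single j 1) := by
    intro u w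
    conv_lhs => rw [← hsum u]
    rw [map_sum, ContinuousLinearMap.sum_apply]
    refine Finset.sum_congr rfl fun i _ => ?_
    rw [_root_.map_smul, ContinuousLinearMap.smul_apply]
    conv_lhs => rw [← hsum w]
    rw [map_sum, Finset.smul_sum]
    refine Finset.sum_congr rfl fun j _ => ?_
    rw [_root_.map_smul]
    simp only [smul_eq_mul]
    ring
  have hBmat : ∀ u w : EuclideanSpace ℝ (Fin m),
      B u w = (fun i => u i) ⬝ᵥ ((S * S) *ᵥ (fun i => w i)) := by
    intro u w
    rw [hBexp u w]
    have hSS' : ∀ i j, (S * S) i j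
        = B (EuclideanSpace.single i 1) (EuclideanSpace.single j 1) := by
      intro i j
      rw [hSS]
      show hess m ψ a i j = _
      rw [hess, Matrix.of_apply, hB2]
    simp only [dotProduct, Matrix.mulVec, hSS']
    refine Finset.sum_congr rfl fun i _ => ?_
    rw [Finset.mul_sum]
    refine Finset.sum_congr rfl fun j _ => ?_
    ring
  have hnormsq : ∀ ζ : EuclideanSpace ℝ (Fin m), (fun i => ζ i) ⬝ᵥ (fun i => ζ i) = ‖ζ‖^2 := by
    intro ζ
    rw [EuclideanSpace.norm_eq, Real.sq_sqrt (by positivity)]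
    simp only [dotProduct]
    refine Finset.sum_congr rfl fun i _ => ?_
    rw [Real.norm_eq_abs, sq_abs, sq]
  have key : ∀ ζ : EuclideanSpace ℝ (Fin m), B (L ζ) (L ζ) = ‖ζ‖ ^ 2 := by
    intro ζ
    have hco : (fun i => (L ζ) i) = S⁻¹ *ᵥ (fun i => ζ i) := by
      funext i
      rw [hLapp]
      rfl
    rw [hBmat, hco]
    have h1 : (S * S) *ᵥ (S⁻¹ *ᵥ fun i => ζ i) = S *ᵥ (fun i => ζ i) := by
      rw [Matrix.mulVec_mulVec, Matrix.mul_assoc, Matrix.mul_nonsing_inv _ hdet, Matrix.mul_one]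
    rw [h1, Matrix.dotProduct_mulVec]
    have h2 : (S⁻¹ *ᵥ (fun i => ζ i)) ᵥ* S = (fun i => ζ i) := by
      rw [← Matrix.mulVec_transpose, hSsymm.eq, Matrix.mulVec_mulVec,
        Matrix.mul_nonsing_inv _ hdet, Matrix.one_mulVec]
    rw [h2, hnormsq]
  have hL2 : ∀ x : EuclideanSpace ℝ (Fin m), ‖L x‖ ≤ 2 * ‖x‖ := by
    intro x
    have h1 : (1 - ε₀) * ‖L x‖^2 ≤ ‖x‖^2 := by
      have := hQ (L x)
      rw [key x] at this
      exact this
    have h2 : ‖L x‖^2 ≤ (2 * ‖x‖)^2 := by nlinarith [norm_nonneg (L x), norm_nonneg x]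
    have h3 := Real.sqrt_le_sqrt h2
    rwa [Real.sqrt_sq (norm_nonneg _), Real.sqrt_sq (by positivity)] at h3
  -- Taylor polynomial P and remainder G
  set ℓ := fderiv ℝ ψ a with hℓdef
  set P : EuclideanSpace ℝ (Fin m) → ℝ :=
    fun x => ψ a + ℓ (x - a) + (2⁻¹ : ℝ) • B (x - a) (x - a) with hPdef
  set G : EuclideanSpace ℝ (Fin m) → ℝ := fun x => ψ x - P x with hGdef
  have hPd1 : ∀ x, HasFDerivAt P (ℓ + B (x - a)) x := by
    intro x
    have h1 : HasFDerivAt (fun y : EuclideanSpace ℝ (Fin m) => ψ a + ℓ (y - a)) ℓ x :=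
      (my_clm_sub_const_hasFDerivAt ℓ a x).const_add (ψ a)
    have h2 := my_quad_hasFDerivAt B hBsymm a x
    exact h1.add h2
  have hPC : ContDiff ℝ (⊤ : ℕ∞) P := by
    rw [hPdef]
    refine (contDiff_const.add (ℓ.contDiff.comp (contDiff_id.sub contDiff_const))).add ?_
    exact ((B.isBoundedBilinearMap.contDiff).comp
      ((contDiff_id.sub contDiff_const).prodMk (contDiff_id.sub contDiff_const))).const_smul _
  have hGC : ContDiff ℝ (⊤ : ℕ∞) G := hψC.sub hPC
  have hGa : G a = 0 := by
    rw [hGdef]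
    simp [hPdef]
  have haff : ∀ x, HasFDerivAt (fun y : EuclideanSpace ℝ (Fin m) => ℓ + B (y - a)) B x := by
    intro x
    have h := (my_clm_sub_const_hasFDerivAt B a x).const_add ℓ
    exact h
  have hPd2 : fderiv ℝ (fderiv ℝ P) = fun _ => B := by
    have hfd : fderiv ℝ P = fun x => ℓ + B (x - a) := funext fun x => (hPd1 x).fderiv
    rw [hfd]
    funext x
    exact (haff x).fderiv
  have hPn3 : ∀ n, 3 ≤ n → ∀ x, iteratedFDeriv ℝ n P x = 0 :=
    fun n hn x => my_iter_zero hPd2 hn x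
  have hGd1 : ∀ x, fderiv ℝ G x = fderiv ℝ ψ x - (ℓ + B (x - a)) := by
    intro x
    rw [hGdef]
    rw [fderiv_fun_sub (hψC.differentiable (by simp) x) (hPd1 x).differentiableAt, (hPd1 x).fderiv]
  have hGd1a : fderiv ℝ G a = 0 := by
    rw [hGd1 a]
    simp [hℓdef]
  have hGd2 : ∀ x, fderiv ℝ (fderiv ℝ G) x = fderiv ℝ (fderiv ℝ ψ) x - B := by
    intro x
    rw [show fderiv ℝ G = fun y => fderiv ℝ ψ y - (fun y => ℓ + B (y - a)) y from funext hGd1]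
    rw [fderiv_fun_sub (hψd1C.differentiable (by simp) x) (haff x).differentiableAt, (haff x).fderiv]
  -- mean value estimates
  have hd3bound : ∀ y ∈ cube m, ‖iteratedFDeriv ℝ 3 ψ y‖ ≤ ε₀ := by
    intro y hy
    exact hDn 3 le_rfl (by omega) y hy
  have hdist2 : ∀ x ∈ cube m, ‖fderiv ℝ (fderiv ℝ ψ) x - B‖ ≤ ε₀ * ‖x - a‖ := by
    intro x hx
    exact Convex.norm_image_sub_le_of_norm_hasFDerivWithin_le
      (f := fderiv ℝ (fderiv ℝ ψ)) (f' := fun y => fderiv ℝ (fderiv ℝ (fderiv ℝ ψ)) y)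
      (s := cube m)
      (fun y _ => ((hψd2C.differentiable (by simp) y).hasFDerivAt).hasFDerivWithinAt)
      (fun y hy => ContinuousLinearMap.opNorm_le_bound _ hε₀.le fun v =>
          ContinuousLinearMap.opNorm_le_bound _ (by positivity) fun w =>
          ContinuousLinearMap.opNorm_le_bound _ (by positivity) fun u =>
          my_fderiv3_bound ψ y ε₀ (hd3bound y hy) v w u) hconv hac hx
  have hG2 : ∀ x ∈ cube m, ‖iteratedFDeriv ℝ 2 G x‖ ≤ ε₀ * ‖x - a‖ := by
    intro x hx
    refine ContinuousMultilinearMap.opNorm_le_bound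
      (mul_nonneg hε₀.le (norm_nonneg _)) fun v => ?_
    rw [iteratedFDeriv_two_apply, hGd2 x, Fin.prod_univ_two]
    calc ‖(fderiv ℝ (fderiv ℝ ψ) x - B) (v 0) (v 1)‖
        ≤ ‖(fderiv ℝ (fderiv ℝ ψ) x - B) (v 0)‖ * ‖v 1‖ :=
          ContinuousLinearMap.le_opNorm _ _
      _ ≤ (‖fderiv ℝ (fderiv ℝ ψ) x - B‖ * ‖v 0‖) * ‖v 1‖ := by
          have := ContinuousLinearMap.le_opNorm (fderiv ℝ (fderiv ℝ ψ) x - B) (v 0)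
          exact mul_le_mul_of_nonneg_right this (norm_nonneg _)
      _ ≤ ((ε₀ * ‖x - a‖) * ‖v 0‖) * ‖v 1‖ := by
          have h := hdist2 x hx
          gcongr
      _ = (ε₀ * ‖x - a‖) * (‖v 0‖ * ‖v 1‖) := by ring
  have hG1 : ∀ x ∈ cube m, ‖fderiv ℝ G x‖ ≤ ε₀ * ‖x - a‖ * ‖x - a‖ := by
    intro x hx
    have hseg : segment ℝ a x ⊆ cube m := hconv.segment_subset hac hx
    have h := Convex.norm_image_sub_le_of_norm_hasFDerivWithin_le
      (f := fderiv ℝ G) (f' := fun y => fderiv ℝ (fderiv ℝ G) y) (s := segment ℝ a x)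
      (C := ε₀ * ‖x - a‖)
      (fun y _ => (((hGC.fderiv_right (m := (⊤ : ℕ∞)) (by simp)).differentiable (by simp) y).hasFDerivAt).hasFDerivWithinAt)
      (fun y hy => by
        show ‖fderiv ℝ (fderiv ℝ G) y‖ ≤ ε₀ * ‖x - a‖
        rw [hGd2 y]
        calc ‖fderiv ℝ (fderiv ℝ ψ) y - B‖ ≤ ε₀ * ‖y - a‖ := hdist2 y (hseg hy)
          _ ≤ ε₀ * ‖x - a‖ := by
              have := hsegnorm x y hy
              exact mul_le_mul_of_nonneg_left this hε₀.le)
      (convex_segment a x) (left_mem_segment ℝ a x) (right_mem_segment ℝ a x)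
    rw [hGd1a, sub_zero] at h
    exact h
  have hG0 : ∀ x ∈ cube m, ‖G x‖ ≤ ε₀ * ‖x - a‖ * ‖x - a‖ * ‖x - a‖ := by
    intro x hx
    have hseg : segment ℝ a x ⊆ cube m := hconv.segment_subset hac hx
    have h := Convex.norm_image_sub_le_of_norm_hasFDerivWithin_le
      (f := G) (f' := fun y => fderiv ℝ G y) (s := segment ℝ a x)
      (C := ε₀ * ‖x - a‖ * ‖x - a‖)
      (fun y _ => ((hGC.differentiable (by simp) y).hasFDerivAt).hasFDerivWithinAt)
      (fun y hy => by
        show ‖fderiv ℝ G y‖ ≤ ε₀ * ‖x - a‖ * ‖x - a‖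
        calc ‖fderiv ℝ G y‖ ≤ ε₀ * ‖y - a‖ * ‖y - a‖ := hG1 y (hseg hy)
          _ ≤ ε₀ * ‖x - a‖ * ‖x - a‖ := by
              have h1 := hsegnorm x y hy
              have h2 : (0:ℝ) ≤ ε₀ := hε₀.le
              gcongr)
      (convex_segment a x) (left_mem_segment ℝ a x) (right_mem_segment ℝ a x)
    rw [hGa, sub_zero] at h
    exact h
  have hGn3 : ∀ n, 3 ≤ n → n ≤ N → ∀ x ∈ cube m, ‖iteratedFDeriv ℝ n G x‖ ≤ ε₀ := by
    intro n h3 hn x hx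
    have hsub : iteratedFDeriv ℝ n G x = iteratedFDeriv ℝ n ψ x - iteratedFDeriv ℝ n P x := by
      have h1 : iteratedFDeriv ℝ n (fun y => ψ y + (fun z => -P z) y) x
          = iteratedFDeriv ℝ n ψ x + iteratedFDeriv ℝ n (fun z => -P z) x :=
        iteratedFDeriv_add_apply' (hψC.of_le (by exact_mod_cast le_top)).contDiffAt ((hPC.neg).of_le (by exact_mod_cast le_top)).contDiffAt
      have h2 : iteratedFDeriv ℝ n G x = iteratedFDeriv ℝ n (fun y => ψ y + (fun z => -P z) y) x := by
        congr 1
      have h3' : iteratedFDeriv ℝ n (fun z => -P z) x = -iteratedFDeriv ℝ n P x := by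
        have := iteratedFDeriv_neg_apply (i := n) (f := P) (x := x) (𝕜 := ℝ)
        exact this
      rw [h2, h1, h3', ← sub_eq_add_neg]
    rw [hsub, hPn3 n h3 x, sub_zero]
    exact hDn n h3 hn x hx
  -- numeric keys
  have hk1 : 8*ε*μ ≤ 1 := by
    refine le_trans (mul_le_mul_of_nonneg_left hcube1 (by linarith : (0:ℝ) ≤ 8*ε)) h8
  have hk2 : 8*ε*μ^2 ≤ 1 := by
    refine le_trans (mul_le_mul_of_nonneg_left hcube2 (by linarith : (0:ℝ) ≤ 8*ε)) h8
  have hk3 : 8*ε*μ^3 ≤ 1 := by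
    refine le_trans (mul_le_mul_of_nonneg_left hcube3 (by linarith : (0:ℝ) ≤ 8*ε)) h8
  -- composition with the affine map
  set T : EuclideanSpace ℝ (Fin m) →L[ℝ] EuclideanSpace ℝ (Fin m) := ε • L with hTdef
  have hTapp : ∀ ζ, T ζ = ε • L ζ := fun ζ => rfl
  have hTnorm : ‖T‖ ≤ 2 * ε := by
    refine ContinuousLinearMap.opNorm_le_bound _ (by positivity) fun ζ => ?_
    rw [hTapp, norm_smul, Real.norm_eq_abs, abs_of_pos hε]
    calc ε * ‖L ζ‖ ≤ ε * (2 * ‖ζ‖) := mul_le_mul_of_nonneg_left (hL2 ζ) hε.le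
      _ = 2 * ε * ‖ζ‖ := by ring
  set Gs : EuclideanSpace ℝ (Fin m) → ℝ := fun z => G (a + z) with hGsdef
  have hGsC : ContDiff ℝ (⊤ : ℕ∞) Gs := hGC.comp (contDiff_const.add contDiff_id)
  set W : EuclideanSpace ℝ (Fin m) → ℝ := fun ζ => G (a + ε • L ζ) with hWdef
  have hWcomp : W = Gs ∘ ⇑T := rfl
  have hWC : ContDiff ℝ (⊤ : ℕ∞) W := by rw [hWcomp]; exact hGsC.comp T.contDiff
  have hWiter : ∀ (n : ℕ) (ζ : EuclideanSpace ℝ (Fin m)),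
      ‖iteratedFDeriv ℝ n W ζ‖ ≤ (2*ε)^n * ‖iteratedFDeriv ℝ n G (a + ε • L ζ)‖ := by
    intro n ζ
    have h1 : iteratedFDeriv ℝ n W ζ
        = (iteratedFDeriv ℝ n Gs (T ζ)).compContinuousLinearMap (fun _ => T) := by
      rw [hWcomp]
      exact T.iteratedFDeriv_comp_right hGsC ζ (by exact_mod_cast le_top)
    have h3 : iteratedFDeriv ℝ n Gs (T ζ) = iteratedFDeriv ℝ n G (a + ε • L ζ) :=
      my_iteratedFDeriv_comp_const_add n hGC a (T ζ)
    rw [h1, h3]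
    calc ‖(iteratedFDeriv ℝ n G (a + ε • L ζ)).compContinuousLinearMap (fun _ => T)‖
        ≤ ‖iteratedFDeriv ℝ n G (a + ε • L ζ)‖ * ∏ _i : Fin n, ‖T‖ :=
          ContinuousMultilinearMap.norm_compContinuousLinearMap_le _ _
      _ ≤ (2*ε)^n * ‖iteratedFDeriv ℝ n G (a + ε • L ζ)‖ := by
          rw [Finset.prod_const, Finset.card_univ, Fintype.card_fin, mul_comm]
          have hp : ‖T‖^n ≤ (2*ε)^n := pow_le_pow_left₀ (norm_nonneg T) hTnorm n
          exact mul_le_mul_of_nonneg_right hp (norm_nonneg _)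
  have hx0 : ∀ ζ : EuclideanSpace ℝ (Fin m), a + ε • L ζ - a = ε • L ζ :=
    fun ζ => by rw [add_sub_cancel_left]
  have hεne : ε ≠ 0 := hε.ne'
  have hfeq : (fun z => rescaled m ψ a S ε z - psi0 z) = fun ζ => (ε⁻¹^2 : ℝ) • W ζ := by
    funext ζ
    have hPx : P (a + ε • L ζ) = ψ a + ε * ℓ (L ζ) + 2⁻¹ * (ε^2 * ‖ζ‖^2) := by
      simp only [hPdef]
      rw [hx0 ζ, _root_.map_smul ℓ, _root_.map_smul B, ContinuousLinearMap.smul_apply,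
        _root_.map_smul (B (L ζ)), key ζ]
      simp only [smul_eq_mul]
      ring
    show rescaled m ψ a S ε ζ - psi0 ζ = (ε⁻¹^2 : ℝ) • (G (a + ε • L ζ))
    rw [show G (a + ε • L ζ) = ψ (a + ε • L ζ) - P (a + ε • L ζ) from rfl, hPx]
    have hres : rescaled m ψ a S ε ζ
        = ε⁻¹^2 * (ψ (a + ε • L ζ) - ψ a - ε * ℓ (L ζ)) := by
      simp only [rescaled]
      rw [← hLapp ζ, ← hℓdef]
    rw [hres]
    have hψ0 : psi0 ζ = ‖ζ‖^2/2 := rfl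
    rw [hψ0, smul_eq_mul]
    field_simp
    ring
  constructor
  · -- smoothness
    have hre : rescaled m ψ a S ε = fun ζ => (ε⁻¹^2 : ℝ) • W ζ + psi0 ζ := by
      funext ζ
      have h := congrFun hfeq ζ
      simp only [smul_eq_mul] at h ⊢
      linarith [h]
    rw [hre]
    exact (hWC.const_smul _).add hpsi0C
  · intro n hn ζ hζ
    rw [hfeq, iteratedFDeriv_const_smul_apply' (hWC.of_le (by exact_mod_cast le_top)).contDiffAt, norm_smul]
    have hδ : ‖a + ε • L ζ - a‖ ≤ 2 * ε * μ := by
      rw [hx0 ζ, norm_smul, Real.norm_eq_abs, abs_of_pos hε]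
      calc ε * ‖L ζ‖ ≤ ε * (2 * ‖ζ‖) := mul_le_mul_of_nonneg_left (hL2 ζ) hε.le
        _ ≤ ε * (2 * μ) := by
            have := hnormcube ζ hζ
            have h2 : (0:ℝ) ≤ ε := hε.le
            gcongr
        _ = 2 * ε * μ := by ring
    have hδhalf : ‖a + ε • L ζ - a‖ ≤ 1/2 := le_trans hδ (by linarith [hk1])
    have hxc : a + ε • L ζ ∈ cube m := hmem _ hδhalf
    have hnormabs : ‖(ε⁻¹^2 : ℝ)‖ = (ε^2)⁻¹ := by
      rw [Real.norm_eq_abs, abs_of_pos (by positivity), inv_pow]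
    rw [hnormabs]
    have hεsq : (0:ℝ) < ε^2 := by positivity
    rw [inv_mul_le_iff₀ hεsq]
    have hW := hWiter n ζ
    have hδ0 : (0:ℝ) ≤ ‖a + ε • L ζ - a‖ := norm_nonneg _
    have hε₀le : (0:ℝ) ≤ ε₀ := hε₀.le
    rcases n with _ | _ | _ | k
    · -- n = 0
      calc ‖iteratedFDeriv ℝ 0 W ζ‖ ≤ (2*ε)^0 * ‖iteratedFDeriv ℝ 0 G (a + ε • L ζ)‖ := hW
        _ = ‖G (a + ε • L ζ)‖ := by rw [pow_zero, one_mul, norm_iteratedFDeriv_zero]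
        _ ≤ ε₀ * ‖a + ε • L ζ - a‖ * ‖a + ε • L ζ - a‖ * ‖a + ε • L ζ - a‖ :=
            hG0 _ hxc
        _ ≤ ε₀ * (2*ε*μ) * (2*ε*μ) * (2*ε*μ) := by gcongr
        _ = (ε^2 * ε₀) * (8*ε*μ^3) := by ring
        _ ≤ (ε^2 * ε₀) * 1 := by
            exact mul_le_mul_of_nonneg_left hk3 (by positivity)
        _ = ε^2 * ε₀ := mul_one _
    · -- n = 1
      calc ‖iteratedFDeriv ℝ 1 W ζ‖ ≤ (2*ε)^1 * ‖iteratedFDeriv ℝ 1 G (a + ε • L ζ)‖ := hW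
        _ = (2*ε) * ‖fderiv ℝ G (a + ε • L ζ)‖ := by rw [pow_one, my_norm_fderiv_eq]
        _ ≤ (2*ε) * (ε₀ * ‖a + ε • L ζ - a‖ * ‖a + ε • L ζ - a‖) := by
            have := hG1 _ hxc
            have h2 : (0:ℝ) ≤ 2*ε := by positivity
            exact mul_le_mul_of_nonneg_left this h2
        _ ≤ (2*ε) * (ε₀ * (2*ε*μ) * (2*ε*μ)) := by gcongr
        _ = (ε^2 * ε₀) * (8*ε*μ^2) := by ring
        _ ≤ (ε^2 * ε₀) * 1 := mul_le_mul_of_nonneg_left hk2 (by positivity)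
        _ = ε^2 * ε₀ := mul_one _
    · -- n = 2
      calc ‖iteratedFDeriv ℝ 2 W ζ‖ ≤ (2*ε)^2 * ‖iteratedFDeriv ℝ 2 G (a + ε • L ζ)‖ := hW
        _ ≤ (2*ε)^2 * (ε₀ * ‖a + ε • L ζ - a‖) := by
            have := hG2 _ hxc
            exact mul_le_mul_of_nonneg_left this (by positivity)
        _ ≤ (2*ε)^2 * (ε₀ * (2*ε*μ)) := by gcongr
        _ = (ε^2 * ε₀) * (8*ε*μ) := by ring
        _ ≤ (ε^2 * ε₀) * 1 := mul_le_mul_of_nonneg_left hk1 (by positivity)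
        _ = ε^2 * ε₀ := mul_one _
    · -- n = k + 3
      have h2ε1 : 2*ε ≤ 1 := by linarith
      have h2ε0 : (0:ℝ) ≤ 2*ε := by positivity
      calc ‖iteratedFDeriv ℝ (k+1+1+1) W ζ‖
          ≤ (2*ε)^(k+1+1+1) * ‖iteratedFDeriv ℝ (k+1+1+1) G (a + ε • L ζ)‖ := hW
        _ ≤ (2*ε)^(k+1+1+1) * ε₀ := by
            have := hGn3 (k+1+1+1) (by omega) hn _ hxc
            exact mul_le_mul_of_nonneg_left this (by positivity)
        _ ≤ (2*ε)^3 * ε₀ := by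
            have := pow_le_pow_of_le_one h2ε0 h2ε1 (by omega : 3 ≤ k+1+1+1)
            exact mul_le_mul_of_nonneg_right this hε₀le
        _ = (ε^2 * ε₀) * (8*ε) := by ring
        _ ≤ (ε^2 * ε₀) * 1 := mul_le_mul_of_nonneg_left (by linarith) (by positivity)
        _ = ε^2 * ε₀ := mul_one _

end aux

/-- there is `κ = κ(ε₀, N) > 0`, independent of `a` and `ψ`, such that
`ψ_a^ε ∈ 𝔊(ε₀, N)` whenever `ψ ∈ 𝔊(ε₀, N)`, `a ∈ ½[-1,1]^{d-1}` and `0 < ε ≤ κ`. -/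
theorem stmt0 (d : ℕ) (hd : 2 ≤ d) (ε₀ : ℝ) (hε₀ : 0 < ε₀) (hε₀' : ε₀ < 1/2)
    (N : ℕ) (hN : 100 * d ≤ N) :
    ∃ κ > (0:ℝ), ∀ ψ : EuclideanSpace ℝ (Fin (d-1)) → ℝ, inG (d-1) ε₀ N ψ →
      ∀ a ∈ halfCube (d-1), ∀ S : Matrix (Fin (d-1)) (Fin (d-1)) ℝ,
        S.IsSymm → S.PosDef → S * S = hess (d-1) ψ a →
        ∀ ε : ℝ, 0 < ε → ε ≤ κ → ε ≤ 1/2 →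
          inG (d-1) ε₀ N (rescaled (d-1) ψ a S ε) := by
  refine ⟨1/(8*(((d-1 : ℕ):ℝ)+1)^3), by positivity, ?_⟩
  intro ψ hψ a ha S hsym hpos hSS ε hε hεκ hε2
  exact aux_stmt (d-1) (by omega) hε₀ hε₀' (by omega : 200 ≤ N) ψ hψ a ha S hsym hpos hSS
    ε hε hεκ
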